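/- Let f be the uniform FIF on SG with vertical scaling factor d = 1/5 determined by f(q_i) = 0 for i = 1,2,3 and f(P_i(q_j)) = 1 for all distinct i, j ∈ {1,2,3}. Then for every p ∈ V_*∖V₀, the limit Δf(p) = lim_{m→∞} (3/2)·5^m·Δ_m f(p) exists and equals −15. Consequently, for any real number α, the function u = −(α/15)·f satisfies u(q_i) = 0 for i = 1,2,3 and Δu(p) = α for all p ∈ V_*∖V₀. -/

import Mathlib

open Finset Filter

noncomputable section

/-- Points in the plane. -/
abbrev Pt := Fin 2 → ℝ

/-- The three contraction maps `P_i(x) = (x + q_i)/2`. -/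
def Pmap (q : Fin 3 → Pt) (i : Fin 3) (x : Pt) : Pt := (x + q i) / 2

/-- `Pw q m ω = P_{ω 0} ∘ P_{ω 1} ∘ ⋯ ∘ P_{ω (m-1)}` for a word `ω` of length `m`. -/
def Pw (q : Fin 3 → Pt) : (m : ℕ) → (Fin m → Fin 3) → Pt → Pt
  | 0, _, x => x
  | m + 1, ω, x => Pmap q (ω 0) (Pw q m (fun k => ω k.succ) x)

/-- The level-`m` vertex set `V_m`. -/
def V (q : Fin 3 → Pt) (m : ℕ) : Set Pt :=
  {x | ∃ ω : Fin m → Fin 3, ∃ i : Fin 3, x = Pw q m ω (q i)}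

/-- `V_* = ⋃ m, V_m`. -/
def Vstar (q : Fin 3 → Pt) : Set Pt := ⋃ m, V q m

/-- The Sierpinski gasket, as the closure of `V_*`. -/
def SG (q : Fin 3 → Pt) : Set Pt := closure (Vstar q)

/-- The level-`m` graph energy. -/
def energy (q : Fin 3 → Pt) (m : ℕ) (u : Pt → ℝ) : ℝ :=
  (5/3 : ℝ)^m * ∑ ω : Fin m → Fin 3,
    ∑ p ∈ Finset.univ.filter (fun p : Fin 3 × Fin 3 => p.1 < p.2),
      (u (Pw q m ω (q p.1)) - u (Pw q m ω (q p.2)))^2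

/-- The level-`m` bilinear graph energy. -/
def energyBil (q : Fin 3 → Pt) (m : ℕ) (u v : Pt → ℝ) : ℝ :=
  (5/3 : ℝ)^m * ∑ ω : Fin m → Fin 3,
    ∑ p ∈ Finset.univ.filter (fun p : Fin 3 × Fin 3 => p.1 < p.2),
      (u (Pw q m ω (q p.1)) - u (Pw q m ω (q p.2))) *
        (v (Pw q m ω (q p.1)) - v (Pw q m ω (q p.2)))

open scoped Classical in
/-- The level-`m` graph Laplacian at `x`. -/
def graphLap (q : Fin 3 → Pt) (m : ℕ) (u : Pt → ℝ) (x : Pt) : ℝ :=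
  ∑ ω : Fin m → Fin 3,
    ∑ p ∈ Finset.univ.filter (fun p : Fin 3 × Fin 3 => p.1 ≠ p.2 ∧ Pw q m ω (q p.1) = x),
      (u (Pw q m ω (q p.2)) - u x)

/-- A function is harmonic on `SG` if it is continuous on `SG` and satisfies
the `1/5-2/5` rule. -/
def IsHarmonic (q : Fin 3 → Pt) (h : Pt → ℝ) : Prop :=
  ContinuousOn h (SG q) ∧
  ∀ (m : ℕ) (ω : Fin m → Fin 3) (i j k : Fin 3), i ≠ j → j ≠ k → i ≠ k →
    h (Pw q m ω (Pmap q i (q j))) =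
      2/5 * h (Pw q m ω (q i)) + 2/5 * h (Pw q m ω (q j)) + 1/5 * h (Pw q m ω (q k))

/-- `f` is a fractal interpolation function on `SG` with vertical scaling factors `d i`. -/
def IsFIF (q : Fin 3 → Pt) (d : Fin 3 → ℝ) (f : Pt → ℝ) : Prop :=
  ContinuousOn f (SG q) ∧
  ∃ h : Fin 3 → Pt → ℝ, (∀ i, IsHarmonic q (h i)) ∧
    ∀ i, ∀ x ∈ SG q, f (Pmap q i x) = d i * f x + h i x

/-!
Every `p ∈ V_* ∖ V₀` is a junction point `p = P_τ P_i q_j = P_τ P_j q_i` with `i ≠ j`. Comparing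
dyadic barycentric coordinates (this is where affine independence enters), at level
`m = |τ| + 1 + s` the point `p` is a vertex of exactly the two cells `τ i j^s` and `τ j i^s`, so
`Δ_m f(p)` is a sum of two cell second differences. For a harmonic function each second difference
at `q_j` shrinks by `3/5` per letter `j`, and at a junction the two cancel; hence the FIF relation
`f ∘ P_a = f / 5 + h_a` gives `Δ_m f(p) = 5^{-|τ|} · Δ_{1+s} f(P_i q_j)`. From `f(q_i) = 0` and
`f(P_i q_j) = 1` the latter is `-2 · 5^{-s}`, so `(3/2) 5^m Δ_m f(p) = -15` for all large `m`.
-/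

lemma exists_ofFn_eq_of_length_eq {α : Type*} {l : List α} {m : ℕ} (h : l.length = m) :
    ∃ ω : Fin m → α, List.ofFn ω = l := by
  subst h
  exact ⟨l.get, List.ofFn_get l⟩

def wordMap (q : Fin 3 → Pt) : List (Fin 3) → Pt → Pt
  | [], x => x
  | a :: l, x => Pmap q a (wordMap q l x)

section WordMap

variable (q : Fin 3 → Pt)

lemma wordMap_append (l₁ l₂ : List (Fin 3)) (x : Pt) :
    wordMap q (l₁ ++ l₂) x = wordMap q l₁ (wordMap q l₂ x) := by
  induction l₁ with
  | nil => rfl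
  | cons a t ih => simp [wordMap, ih]

lemma wordMap_append_singleton (σ : List (Fin 3)) (a : Fin 3) (x : Pt) :
    wordMap q (σ ++ [a]) x = wordMap q σ (Pmap q a x) :=
  wordMap_append q σ [a] x

lemma Pw_eq_wordMap : ∀ (m : ℕ) (ω : Fin m → Fin 3) (x : Pt),
    Pw q m ω x = wordMap q (List.ofFn ω) x
  | 0, _, _ => rfl
  | m + 1, ω, x => by rw [List.ofFn_succ]; simp [Pw, wordMap, Pw_eq_wordMap m]

lemma Pmap_self (i : Fin 3) : Pmap q i (q i) = q i := by
  funext t; simp [Pmap]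

lemma Pmap_comm (i j : Fin 3) : Pmap q i (q j) = Pmap q j (q i) := by
  rw [Pmap, Pmap, add_comm]

lemma wordMap_replicate_self (s : ℕ) (j : Fin 3) : wordMap q (List.replicate s j) (q j) = q j := by
  induction s with
  | zero => rfl
  | succ n ih => rw [List.replicate_succ, wordMap, ih, Pmap_self]

lemma wordMap_junction_left (τ : List (Fin 3)) (i j : Fin 3) (s : ℕ) :
    wordMap q (τ ++ i :: List.replicate s j) (q j) = wordMap q (τ ++ [i]) (q j) := by
  rw [← List.singleton_append, ← List.append_assoc, wordMap_append, wordMap_replicate_self]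

lemma wordMap_junction_right (τ : List (Fin 3)) (i j : Fin 3) (s : ℕ) :
    wordMap q (τ ++ j :: List.replicate s i) (q i) = wordMap q (τ ++ [i]) (q j) := by
  rw [wordMap_junction_left, wordMap_append_singleton, wordMap_append_singleton, Pmap_comm]

lemma wordMap_mem_SG (l : List (Fin 3)) (c : Fin 3) : wordMap q l (q c) ∈ SG q :=
  subset_closure <| Set.mem_iUnion.2
    ⟨l.length, l.get, c, by rw [Pw_eq_wordMap, List.ofFn_get]⟩

lemma exists_junction_of_ne_vertex (l : List (Fin 3)) (c : Fin 3)
    (hc : ∀ i, wordMap q l (q c) ≠ q i) :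
    ∃ (τ : List (Fin 3)) (i j : Fin 3), i ≠ j ∧ wordMap q l (q c) = wordMap q (τ ++ [i]) (q j) := by
  induction l using List.reverseRecOn generalizing c with
  | nil => exact absurd rfl (hc c)
  | append_singleton l a ih =>
    by_cases hac : a = c
    · subst hac
      rw [wordMap_append_singleton, Pmap_self] at hc ⊢
      exact ih a hc
    · exact ⟨l, a, c, hac, rfl⟩

end WordMap

/-- `bary l k c` is `2 ^ l.length` times the `c`-th barycentric coordinate of `P_l(q_k)`. -/
def bary : List (Fin 3) → Fin 3 → Fin 3 → ℕ
  | [], k, c => if k = c then 1 else 0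
  | a :: t, k, c => (if a = c then 2 ^ t.length else 0) + bary t k c

lemma sum_bary (l : List (Fin 3)) (k : Fin 3) : ∑ c, bary l k c = 2 ^ l.length := by
  induction l with
  | nil => simp [bary]
  | cons a t ih => simp [bary, Finset.sum_add_distrib, ih, pow_succ, mul_two]

lemma bary_le (l : List (Fin 3)) (k c : Fin 3) : bary l k c ≤ 2 ^ l.length := by
  rw [← sum_bary l k]
  exact Finset.single_le_sum (fun _ _ => Nat.zero_le _) (Finset.mem_univ c)

lemma eq_replicate_of_bary_eq_pow {l : List (Fin 3)} {k c : Fin 3}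
    (h : bary l k c = 2 ^ l.length) : l = List.replicate l.length c ∧ k = c := by
  induction l with
  | nil => simpa [bary] using h
  | cons a t ih =>
    have := bary_le t k c
    by_cases hac : a = c
    · simp only [bary, hac, if_true, List.length_cons, pow_succ] at h
      obtain ⟨ht, hk⟩ := ih (by omega)
      exact ⟨by rw [List.length_cons, List.replicate_succ, hac, ← ht], hk⟩
    · simp only [bary, hac, if_false, List.length_cons, pow_succ] at h
      have := Nat.one_le_two_pow (n := t.length)
      omega

lemma bary_replicate_self (s : ℕ) (j : Fin 3) : bary (List.replicate s j) j j = 2 ^ s := by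
  induction s with
  | zero => simp [bary]
  | succ n ih => simp [List.replicate_succ, bary, ih, pow_succ, mul_two]

lemma smul_wordMap_eq_sum_bary (q : Fin 3 → Pt) (l : List (Fin 3)) (k : Fin 3) :
    (2 : ℝ) ^ l.length • wordMap q l (q k) = ∑ c, (bary l k c : ℝ) • q c := by
  induction l with
  | nil => simp [wordMap, bary]
  | cons a t ih =>
    have h2 : (2 : ℝ) • wordMap q (a :: t) (q k) = wordMap q t (q k) + q a := by
      funext x
      simp only [wordMap, Pmap, Pi.smul_apply, Pi.div_apply, Pi.add_apply, Pi.ofNat_apply,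
        smul_eq_mul]
      ring
    rw [List.length_cons, pow_succ, mul_smul, h2, smul_add, ih]
    simp [bary, add_smul, Finset.sum_add_distrib, ite_smul, add_comm]

lemma bary_eq_of_wordMap_eq {q : Fin 3 → Pt} (hq : AffineIndependent ℝ q)
    {l l' : List (Fin 3)} {k k' : Fin 3} (hlen : l.length = l'.length)
    (h : wordMap q l (q k) = wordMap q l' (q k')) : bary l k = bary l' k' := by
  have hsum := smul_wordMap_eq_sum_bary q l k
  rw [h, hlen, smul_wordMap_eq_sum_bary] at hsum
  have hw : ∑ c, (bary l' k' c : ℝ) = ∑ c, (bary l k c : ℝ) := by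
    simp only [← Nat.cast_sum, sum_bary, hlen]
  funext c
  exact_mod_cast (hq.eq_of_sum_eq_sum hw hsum c (Finset.mem_univ c)).symm

lemma bary_cons_eq_bary_cons {a b k k' : Fin 3} {t t' : List (Fin 3)}
    (hlen : t.length = t'.length) (h : bary (a :: t) k = bary (b :: t') k') :
    (a = b ∧ bary t k = bary t' k') ∨
      (t = List.replicate t.length b ∧ k = b ∧ t' = List.replicate t'.length a ∧ k' = a) := by
  by_cases hab : a = b
  · subst hab
    exact Or.inl ⟨rfl, funext fun c => by simpa [bary, hlen] using congrFun h c⟩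
  · have ha := congrFun h a
    have hb := congrFun h b
    simp only [bary, if_true, if_neg hab, if_neg (Ne.symm hab)] at ha hb
    have : 2 ^ t.length = 2 ^ t'.length := by rw [hlen]
    have := bary_le t k b
    have := bary_le t' k' a
    obtain ⟨ht', hk'⟩ := eq_replicate_of_bary_eq_pow (l := t') (k := k') (c := a) (by omega)
    obtain ⟨ht, hk⟩ := eq_replicate_of_bary_eq_pow (l := t) (k := k) (c := b) (by omega)
    exact Or.inr ⟨ht, hk, ht', hk'⟩

lemma eq_junction_of_bary_eq {i j : Fin 3} (hij : i ≠ j) {s : ℕ} (τ : List (Fin 3))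
    {l : List (Fin 3)} {k : Fin 3} (hlen : l.length = τ.length + 1 + s)
    (h : bary l k = bary (τ ++ i :: List.replicate s j) j) :
    (l = τ ++ i :: List.replicate s j ∧ k = j) ∨ (l = τ ++ j :: List.replicate s i ∧ k = i) := by
  induction τ generalizing l with
  | nil =>
    obtain ⟨a, t, rfl⟩ := List.exists_cons_of_length_eq_add_one (by simpa [add_comm] using hlen)
    have ht : t.length = s := by simp at hlen; omega
    rcases bary_cons_eq_bary_cons (by simpa using ht) h with ⟨rfl, hbt⟩ | ⟨htr, rfl, hrep, rfl⟩
    · obtain ⟨htr, rfl⟩ := eq_replicate_of_bary_eq_pow (l := t) (k := k) (c := j)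
        (by rw [congrFun hbt j, bary_replicate_self, ht])
      exact Or.inl ⟨by rw [htr, ht]; rfl, rfl⟩
    · exact Or.inr ⟨by rw [htr, ht]; rfl, rfl⟩
  | cons b τ ih =>
    obtain ⟨a, t, rfl⟩ := List.exists_cons_of_length_eq_add_one (l := l)
      (n := τ.length + 1 + s) (by simp at hlen ⊢; omega)
    have ht : t.length = (τ ++ i :: List.replicate s j).length := by simp at hlen ⊢; omega
    rcases bary_cons_eq_bary_cons ht h with ⟨rfl, hbt⟩ | ⟨-, -, hrep, rfl⟩
    · rcases ih (by simp at hlen ⊢; omega) hbt with ⟨rfl, rfl⟩ | ⟨rfl, rfl⟩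
      exacts [Or.inl ⟨rfl, rfl⟩, Or.inr ⟨rfl, rfl⟩]
    · have hi : i ∈ τ ++ i :: List.replicate s j := by simp
      rw [hrep] at hi
      exact absurd (List.eq_of_mem_replicate hi) hij

lemma wordMap_eq_junction_iff {q : Fin 3 → Pt} (hq : AffineIndependent ℝ q) {i j : Fin 3}
    (hij : i ≠ j) {s : ℕ} {τ l : List (Fin 3)} (hl : l.length = τ.length + 1 + s) (c : Fin 3) :
    wordMap q l (q c) = wordMap q (τ ++ [i]) (q j) ↔
      (l = τ ++ i :: List.replicate s j ∧ c = j) ∨ (l = τ ++ j :: List.replicate s i ∧ c = i) := by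
  constructor
  · intro h
    rw [← wordMap_junction_left q τ i j s] at h
    exact eq_junction_of_bary_eq hij τ hl (bary_eq_of_wordMap_eq hq (by simp; omega) h)
  · rintro (⟨rfl, rfl⟩ | ⟨rfl, rfl⟩)
    exacts [wordMap_junction_left q τ i c s, wordMap_junction_right q τ c j s]

open scoped Classical in
lemma graphLap_eq_sum_fiber (q : Fin 3 → Pt) (m : ℕ) (u : Pt → ℝ) (p : Pt) :
    graphLap q m u p =
      ∑ x ∈ univ.filter (fun x : (Fin m → Fin 3) × Fin 3 => Pw q m x.1 (q x.2) = p),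
        ∑ c ∈ univ.erase x.2, (u (Pw q m x.1 (q c)) - u p) := by
  rw [graphLap, Finset.sum_filter, Fintype.sum_prod_type]
  refine Finset.sum_congr rfl fun ω _ => ?_
  rw [Finset.sum_filter, Fintype.sum_prod_type]
  refine Finset.sum_congr rfl fun a _ => ?_
  split_ifs with ha
  · simp only [ha, and_true]
    rw [← Finset.sum_filter, Finset.filter_ne]
  · simp [ha]

lemma graphLap_const_mul (q : Fin 3 → Pt) (m : ℕ) (u : Pt → ℝ) (p : Pt) (r : ℝ) :
    graphLap q m (fun x => r * u x) p = r * graphLap q m u p := by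
  simp only [graphLap, Finset.mul_sum, mul_sub]

/-- The contribution `Σ_{c ≠ y} (u(P_l q_c) - u(P_l q_y))` of the cell `l` to the graph Laplacian
at its vertex `P_l q_y`, where `{x, z}` are the other two vertex indices. -/
def secondDiff (q : Fin 3 → Pt) (u : Pt → ℝ) (l : List (Fin 3)) (x y z : Fin 3) : ℝ :=
  u (wordMap q l (q x)) + u (wordMap q l (q z)) - 2 * u (wordMap q l (q y))

/-- The level `|τ| + 1 + s` graph Laplacian at the junction point `P_τ P_i q_j = P_τ P_j q_i`,
which lies in exactly the two cells `τ i j^s` and `τ j i^s`. -/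
def junctionLap (q : Fin 3 → Pt) (u : Pt → ℝ) (τ : List (Fin 3)) (i j k : Fin 3) (s : ℕ) : ℝ :=
  secondDiff q u (τ ++ i :: List.replicate s j) i j k +
    secondDiff q u (τ ++ j :: List.replicate s i) j i k

lemma sum_erase_eq_secondDiff (q : Fin 3 → Pt) {x y z : Fin 3} (hxy : x ≠ y) (hyz : y ≠ z)
    (hxz : x ≠ z) (u : Pt → ℝ) (l : List (Fin 3)) :
    ∑ c ∈ univ.erase y, (u (wordMap q l (q c)) - u (wordMap q l (q y))) =
      secondDiff q u l x y z := by
  have herase : univ.erase y = {x, z} := by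
    revert x y z; decide
  rw [herase, Finset.sum_pair hxz, secondDiff]
  ring

lemma graphLap_junction {q : Fin 3 → Pt} (hq : AffineIndependent ℝ q) {i j k : Fin 3}
    (hij : i ≠ j) (hjk : j ≠ k) (hik : i ≠ k) (u : Pt → ℝ) (τ : List (Fin 3)) (s : ℕ) :
    graphLap q (τ.length + 1 + s) u (wordMap q (τ ++ [i]) (q j)) = junctionLap q u τ i j k s := by
  obtain ⟨ωA, hA⟩ := exists_ofFn_eq_of_length_eq (l := τ ++ i :: List.replicate s j)
    (m := τ.length + 1 + s) (by simp; omega)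
  obtain ⟨ωB, hB⟩ := exists_ofFn_eq_of_length_eq (l := τ ++ j :: List.replicate s i)
    (m := τ.length + 1 + s) (by simp; omega)
  have hfiber : univ.filter (fun x : (Fin (τ.length + 1 + s) → Fin 3) × Fin 3 =>
      Pw q _ x.1 (q x.2) = wordMap q (τ ++ [i]) (q j)) = {(ωA, j), (ωB, i)} := by
    ext ⟨ω, c⟩
    simp only [mem_filter, mem_univ, true_and, mem_insert, mem_singleton, Prod.mk.injEq,
      Pw_eq_wordMap]
    rw [wordMap_eq_junction_iff hq hij (s := s) (by simp) c, ← hA, ← hB, List.ofFn_inj,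
      List.ofFn_inj]
  have hAB : (ωA, j) ≠ (ωB, i) := by simp [hij.symm]
  rw [graphLap_eq_sum_fiber, hfiber, Finset.sum_pair hAB]
  simp only [Pw_eq_wordMap, hA, hB]
  rw [← wordMap_junction_left q τ i j s, sum_erase_eq_secondDiff q hij hjk hik,
    wordMap_junction_left, ← wordMap_junction_right q τ i j s,
    sum_erase_eq_secondDiff q hij.symm hik hjk, junctionLap]

namespace IsHarmonic

variable {q : Fin 3 → Pt} {h : Pt → ℝ}

lemma apply_wordMap_Pmap (hh : IsHarmonic q h) (σ : List (Fin 3)) {i j k : Fin 3}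
    (hij : i ≠ j) (hjk : j ≠ k) (hik : i ≠ k) :
    h (wordMap q σ (Pmap q i (q j))) =
      2/5 * h (wordMap q σ (q i)) + 2/5 * h (wordMap q σ (q j)) + 1/5 * h (wordMap q σ (q k)) := by
  obtain ⟨ω, hω⟩ := exists_ofFn_eq_of_length_eq (l := σ) rfl
  simpa only [Pw_eq_wordMap, hω] using hh.2 _ ω i j k hij hjk hik

lemma secondDiff_append_replicate (hh : IsHarmonic q h) (σ : List (Fin 3)) {x y z : Fin 3}
    (hxy : x ≠ y) (hyz : y ≠ z) (hxz : x ≠ z) (s : ℕ) :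
    secondDiff q h (σ ++ List.replicate s y) x y z = (3/5) ^ s * secondDiff q h σ x y z := by
  induction s with
  | zero => simp
  | succ n ih =>
    rw [List.replicate_succ', ← List.append_assoc, pow_succ, mul_comm _ (3/5 : ℝ), mul_assoc, ← ih]
    simp only [secondDiff, wordMap_append_singleton, Pmap_self]
    rw [hh.apply_wordMap_Pmap _ hxy.symm hxz hyz, hh.apply_wordMap_Pmap _ hyz hxz.symm hxy.symm]
    ring

lemma junctionLap_eq_zero (hh : IsHarmonic q h) (τ : List (Fin 3)) {i j k : Fin 3}
    (hij : i ≠ j) (hjk : j ≠ k) (hik : i ≠ k) (s : ℕ) : junctionLap q h τ i j k s = 0 := by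
  have hcell : ∀ a b : Fin 3, τ ++ a :: List.replicate s b = (τ ++ [a]) ++ List.replicate s b :=
    fun _ _ => by simp
  rw [junctionLap, hcell, hcell, hh.secondDiff_append_replicate _ hij hjk hik,
    hh.secondDiff_append_replicate _ hij.symm hik hjk, ← mul_add]
  simp only [secondDiff, wordMap_append_singleton, Pmap_self]
  rw [hh.apply_wordMap_Pmap _ hik hjk.symm hij, hh.apply_wordMap_Pmap _ hij hjk hik,
    hh.apply_wordMap_Pmap _ hjk hik.symm hij.symm, hh.apply_wordMap_Pmap _ hij.symm hik hjk]
  ring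

end IsHarmonic

section FIF

variable {q : Fin 3 → Pt} {f : Pt → ℝ} {h : Fin 3 → Pt → ℝ}
  (hrel : ∀ a, ∀ x ∈ SG q, f (Pmap q a x) = 1/5 * f x + h a x)

include hrel

lemma secondDiff_cons (a : Fin 3) (l : List (Fin 3)) (x y z : Fin 3) :
    secondDiff q f (a :: l) x y z = 1/5 * secondDiff q f l x y z + secondDiff q (h a) l x y z := by
  simp only [secondDiff, wordMap, hrel a _ (wordMap_mem_SG q l _)]
  ring

lemma junctionLap_eq_pow_mul (hharm : ∀ a, IsHarmonic q (h a)) {i j k : Fin 3} (hij : i ≠ j)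
    (hjk : j ≠ k) (hik : i ≠ k) (s : ℕ) (τ : List (Fin 3)) :
    junctionLap q f τ i j k s = (1/5) ^ τ.length * junctionLap q f [] i j k s := by
  induction τ with
  | nil => simp
  | cons a τ ih =>
    have hzero := (hharm a).junctionLap_eq_zero τ hij hjk hik s
    simp only [junctionLap, List.cons_append, secondDiff_cons hrel] at hzero ih ⊢
    rw [List.length_cons, pow_succ]
    linear_combination (1/5 : ℝ) * ih + hzero

variable (hb : ∀ c, f (q c) = 0) (hv : ∀ a c, a ≠ c → f (Pmap q a (q c)) = 1)

include hb

lemma harmonicPart_apply_self (a : Fin 3) : h a (q a) = 0 := by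
  have := hrel a (q a) (wordMap_mem_SG q [] a)
  rw [Pmap_self, hb] at this
  linarith

include hv in
lemma harmonicPart_apply_of_ne {a c : Fin 3} (hac : a ≠ c) : h a (q c) = 1 := by
  have := hrel a (q c) (wordMap_mem_SG q [] c)
  rw [hv a c hac, hb] at this
  linarith

include hv

lemma secondDiff_replicate (hharm : ∀ a, IsHarmonic q (h a)) {i j k : Fin 3} (hij : i ≠ j)
    (hjk : j ≠ k) (hik : i ≠ k) (s : ℕ) :
    secondDiff q f (List.replicate s j) i j k = 5 * (3/5) ^ s - 5 * (1/5) ^ s := by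
  induction s with
  | zero => simp [secondDiff, wordMap, hb]
  | succ n ih =>
    have hharmonic := (hharm j).secondDiff_append_replicate [] hij hjk hik n
    simp only [List.nil_append, secondDiff, wordMap, harmonicPart_apply_of_ne hrel hb hv hij.symm,
      harmonicPart_apply_of_ne hrel hb hv hjk, harmonicPart_apply_self hrel hb] at hharmonic
    rw [List.replicate_succ, secondDiff_cons hrel, ih, secondDiff, hharmonic]
    ring

lemma junctionLap_nil (hharm : ∀ a, IsHarmonic q (h a)) {i j k : Fin 3} (hij : i ≠ j)
    (hjk : j ≠ k) (hik : i ≠ k) (s : ℕ) : junctionLap q f [] i j k s = -2 * (1/5) ^ s := by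
  have hi := (hharm i).secondDiff_append_replicate [] hij hjk hik s
  have hj := (hharm j).secondDiff_append_replicate [] hij.symm hik hjk s
  simp only [List.nil_append, secondDiff, wordMap, harmonicPart_apply_of_ne hrel hb hv hij,
    harmonicPart_apply_of_ne hrel hb hv hik, harmonicPart_apply_of_ne hrel hb hv hij.symm,
    harmonicPart_apply_of_ne hrel hb hv hjk, harmonicPart_apply_self hrel hb] at hi hj
  rw [junctionLap, List.nil_append, List.nil_append, secondDiff_cons hrel, secondDiff_cons hrel,
    secondDiff_replicate hrel hb hv hharm hij hjk hik,
    secondDiff_replicate hrel hb hv hharm hij.symm hik hjk, secondDiff, secondDiff, hi, hj]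
  ring

end FIF

lemma eventually_graphLap_fif_eq {q : Fin 3 → Pt} (hq : AffineIndependent ℝ q) {f : Pt → ℝ}
    {h : Fin 3 → Pt → ℝ} (hharm : ∀ a, IsHarmonic q (h a))
    (hrel : ∀ a, ∀ x ∈ SG q, f (Pmap q a x) = 1/5 * f x + h a x) (hb : ∀ c, f (q c) = 0)
    (hv : ∀ a c, a ≠ c → f (Pmap q a (q c)) = 1) {p : Pt} (hp : p ∈ Vstar q \ V q 0) :
    ∀ᶠ m in atTop, (3/2 : ℝ) * 5 ^ m * graphLap q m f p = -15 := by
  obtain ⟨hp, hp0⟩ := hp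
  obtain ⟨m₀, ω₀, c₀, rfl⟩ := Set.mem_iUnion.1 hp
  rw [Pw_eq_wordMap] at hp0 ⊢
  obtain ⟨τ, i, j, hij, hpτ⟩ :=
    exists_junction_of_ne_vertex q _ c₀ fun c hc => hp0 ⟨Fin.elim0, c, hc⟩
  have hthird : ∀ a b : Fin 3, ∃ k, a ≠ k ∧ b ≠ k := by decide
  obtain ⟨k, hik, hjk⟩ := hthird i j
  rw [hpτ, eventually_atTop]
  refine ⟨τ.length + 1, fun m hm => ?_⟩
  obtain ⟨s, rfl⟩ := Nat.exists_eq_add_of_le hm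
  rw [graphLap_junction hq hij hjk hik, junctionLap_eq_pow_mul hrel hharm hij hjk hik,
    junctionLap_nil hrel hb hv hharm hij hjk hik]
  simp only [one_div, inv_pow]
  field_simp
  ring

/-- for the uniform FIF `f` with `d = 1/5`, `f(q_i) = 0` and
`f(P_i(q_j)) = 1`, one has `Δf(p) = -15` on `V_* \ V₀`; consequently
`u = -(α/15)f` solves `u(q_i) = 0`, `Δu = α`. -/
theorem stmt_12 (q : Fin 3 → Pt) (hq : AffineIndependent ℝ q)
    (f : Pt → ℝ) (hf : IsFIF q (fun _ => (1/5 : ℝ)) f)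
    (hb : ∀ i : Fin 3, f (q i) = 0)
    (hv : ∀ i j : Fin 3, i ≠ j → f (Pmap q i (q j)) = 1) :
    (∀ p ∈ Vstar q \ V q 0,
      Filter.Tendsto (fun m : ℕ => (3/2 : ℝ) * 5^m * graphLap q m f p)
        Filter.atTop (nhds (-15))) ∧
    (∀ α : ℝ,
      (∀ i : Fin 3, -(α/15) * f (q i) = 0) ∧
      (∀ p ∈ Vstar q \ V q 0,
        Filter.Tendsto
          (fun m : ℕ => (3/2 : ℝ) * 5^m * graphLap q m (fun x => -(α/15) * f x) p)
          Filter.atTop (nhds α))) := by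
  obtain ⟨-, h, hharm, hrel⟩ := hf
  have hlap : ∀ p ∈ Vstar q \ V q 0,
      Tendsto (fun m : ℕ => (3/2 : ℝ) * 5 ^ m * graphLap q m f p) atTop (nhds (-15)) :=
    fun p hp => tendsto_const_nhds.congr'
      (EventuallyEq.symm (eventually_graphLap_fif_eq hq hharm hrel hb hv hp))
  refine ⟨hlap, fun α => ⟨fun i => by rw [hb, mul_zero], fun p hp => ?_⟩⟩
  convert (hlap p hp).const_mul (-(α/15)) using 1
  · funext m
    rw [graphLap_const_mul]
    ring
  · congr 1
    ring

end
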